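/- arXiv:2212.01623 — 3 statements merged into one kernel-verified Lean document; each statement's English description precedes it below -/
import Mathlib

section
/- The WLSE function is equivalent to the maximum operator as ρ goes to infinity: let w : Fin n → ℝ satisfy w i ≥ 0 for all i and Σ_i w i = 1, let x : Fin n → ℝ, and suppose there exists an index m with x m = max_i x i and w m > 0. Then WLSE_{ρ,w}(x) tends to max_i x i as ρ → ∞. -/
/-- The weighted LogSumExp function: `WLSE ρ w x = (1/ρ) * log (∑ i, w i * exp (ρ * x i))`. -/
noncomputable def WLSE {n : ℕ} (ρ : ℝ) (w x : Fin n → ℝ) : ℝ :=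
  (1 / ρ) * Real.log (∑ i, w i * Real.exp (ρ * x i))

/-!
For `ρ > 0` the exponential sum is squeezed between its `m`-th term `w m * exp (ρ * M)` and
`exp (ρ * M)`, where `M = x m` is the maximum. Taking `(1 / ρ) * log` gives
`M + log (w m) / ρ ≤ WLSE ρ w x ≤ M`, and the lower bound tends to `M` because `w m > 0`.
-/

open Real Finset Filter

section WeightedExpSum

variable {ι : Type*} [Fintype ι] {w : ι → ℝ}

lemma sum_mul_exp_pos (hw0 : ∀ i, 0 ≤ w i) (hw1 : ∑ i, w i = 1) (ρ : ℝ) (x : ι → ℝ) :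
    0 < ∑ i, w i * exp (ρ * x i) := by
  obtain ⟨i, -, hi⟩ := exists_ne_zero_of_sum_ne_zero (hw1 ▸ one_ne_zero : ∑ i, w i ≠ 0)
  exact sum_pos' (fun i _ => mul_nonneg (hw0 i) (exp_pos _).le)
    ⟨i, mem_univ i, mul_pos ((hw0 i).lt_of_ne' hi) (exp_pos _)⟩

lemma sum_mul_exp_le_exp_mul (hw0 : ∀ i, 0 ≤ w i) (hw1 : ∑ i, w i = 1) {ρ M : ℝ}
    (hρ : 0 ≤ ρ) {x : ι → ℝ} (hx : ∀ i, x i ≤ M) : ∑ i, w i * exp (ρ * x i) ≤ exp (ρ * M) :=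
  calc ∑ i, w i * exp (ρ * x i) ≤ ∑ i, w i * exp (ρ * M) :=
        sum_le_sum fun i _ => mul_le_mul_of_nonneg_left
          (exp_le_exp.mpr (mul_le_mul_of_nonneg_left (hx i) hρ)) (hw0 i)
    _ = exp (ρ * M) := by rw [← sum_mul, hw1, one_mul]

end WeightedExpSum

section WLSE

variable {n : ℕ} {ρ : ℝ} {w x : Fin n → ℝ}

lemma add_log_div_le_WLSE (hw0 : ∀ i, 0 ≤ w i) (hρ : 0 < ρ) {m : Fin n} (hwm : 0 < w m) :
    x m + log (w m) / ρ ≤ WLSE ρ w x := by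
  have hterm : w m * exp (ρ * x m) ≤ ∑ i, w i * exp (ρ * x i) :=
    single_le_sum (f := fun i => w i * exp (ρ * x i))
      (fun i _ => mul_nonneg (hw0 i) (exp_pos _).le) (mem_univ m)
  have hlog : log (w m) + ρ * x m ≤ log (∑ i, w i * exp (ρ * x i)) := by
    rw [← log_exp (ρ * x m), ← log_mul hwm.ne' (exp_pos _).ne']
    exact log_le_log (by positivity) hterm
  calc x m + log (w m) / ρ = (1 / ρ) * (log (w m) + ρ * x m) := by field_simp; ring
    _ ≤ WLSE ρ w x := mul_le_mul_of_nonneg_left hlog (by positivity)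

lemma WLSE_le (hw0 : ∀ i, 0 ≤ w i) (hw1 : ∑ i, w i = 1) (hρ : 0 < ρ) {M : ℝ}
    (hx : ∀ i, x i ≤ M) : WLSE ρ w x ≤ M := by
  have hlog : log (∑ i, w i * exp (ρ * x i)) ≤ ρ * M := by
    rw [← log_exp (ρ * M)]
    exact log_le_log (sum_mul_exp_pos hw0 hw1 ρ x) (sum_mul_exp_le_exp_mul hw0 hw1 hρ.le hx)
  calc WLSE ρ w x ≤ (1 / ρ) * (ρ * M) := mul_le_mul_of_nonneg_left hlog (by positivity)
    _ = M := by field_simp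

end WLSE

/-- The WLSE function is equivalent to the maximum operator as ρ goes to infinity:
if some maximizing index `m` has `w m > 0`, then `WLSE ρ w x → max_i x i` as `ρ → ∞`. -/
theorem wlse_tendsto_max {n : ℕ} (hn : 1 ≤ n)
    (w : Fin n → ℝ) (hw0 : ∀ i, 0 ≤ w i) (hw1 : ∑ i, w i = 1)
    (x : Fin n → ℝ)
    (hm : ∃ m : Fin n,
      x m = Finset.univ.sup' (Finset.univ_nonempty_iff.mpr ⟨⟨0, hn⟩⟩) x ∧ 0 < w m) :
    Filter.Tendsto (fun ρ : ℝ => WLSE ρ w x) Filter.atTop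
      (nhds (Finset.univ.sup' (Finset.univ_nonempty_iff.mpr ⟨⟨0, hn⟩⟩) x)) := by
  obtain ⟨m, hxm, hwm⟩ := hm
  set M := Finset.univ.sup' (Finset.univ_nonempty_iff.mpr ⟨⟨0, hn⟩⟩) x
  have hlower : Tendsto (fun ρ : ℝ => M + log (w m) / ρ) atTop (nhds M) := by
    simpa using tendsto_const_nhds.add (tendsto_const_nhds.div_atTop (tendsto_id (α := ℝ)))
  refine tendsto_of_tendsto_of_tendsto_of_le_of_le' hlower tendsto_const_nhds ?_ ?_
  · filter_upwards [eventually_gt_atTop 0] with ρ hρ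
    simpa only [hxm] using add_log_div_le_WLSE (x := x) hw0 hρ hwm
  · filter_upwards [eventually_gt_atTop 0] with ρ hρ
    exact WLSE_le hw0 hw1 hρ fun i => le_sup' x (mem_univ i)
end

section
/- γ-contraction property of the smoothing worst-case Bellman operator: for any zero-sum Markov game with finite nonempty S, A, U, any protagonist policy π, adversarial policy μ, transition model p, reward r, discount γ ∈ [0,1), and any ρ > 0, the smoothing worst-case Bellman operator T̃^π satisfies ‖T̃^π V − T̃^π W‖_∞ ≤ γ · ‖V − W‖_∞ for all V, W : S → ℝ. -/
open Finset

/-- The ∞-norm of a function on a finite nonempty state space: `‖V‖_∞ = max_s |V s|`. -/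
noncomputable def normInf {S : Type*} [Fintype S] [Nonempty S] (V : S → ℝ) : ℝ :=
  Finset.univ.sup' Finset.univ_nonempty (fun s => |V s|)

/-- The smoothing worst-case Bellman operator
`(T̃^π V)(s) = (1/ρ) log ∑_u μ(u|s) exp (ρ ∑_a π(a|s) ∑_{s'} p(s'|s,a,u) (r(s,a,u) + γ V(s')))`. -/
noncomputable def smoothBellman {S A U : Type*} [Fintype S] [Fintype A] [Fintype U]
    (ρ γ : ℝ) (π : S → A → ℝ) (μ : S → U → ℝ) (p : S → A → U → S → ℝ)
    (r : S → A → U → ℝ) (V : S → ℝ) : S → ℝ :=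
  fun s => (1 / ρ) * Real.log (∑ u, μ s u *
    Real.exp (ρ * ∑ a, π s a * ∑ s', p s a u s' * (r s a u + γ * V s')))

/-- The worst-case Bellman operator
`(T^π V)(s) = max_u ∑_a π(a|s) ∑_{s'} p(s'|s,a,u) (r(s,a,u) + γ V(s'))`. -/
noncomputable def worstBellman {S A U : Type*} [Fintype S] [Fintype A] [Fintype U]
    [Nonempty U] (γ : ℝ) (π : S → A → ℝ) (p : S → A → U → S → ℝ)
    (r : S → A → U → ℝ) (V : S → ℝ) : S → ℝ :=
  fun s => Finset.univ.sup' Finset.univ_nonempty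
    (fun u => ∑ a, π s a * ∑ s', p s a u s' * (r s a u + γ * V s'))


lemma sum_exp_pos {U : Type*} [Fintype U] (μ : U → ℝ) (hμ0 : ∀ u, 0 ≤ μ u)
    (hμ1 : ∑ u, μ u = 1) (f : U → ℝ) :
    0 < ∑ u, μ u * Real.exp (f u) := by
  obtain ⟨u, hu⟩ : ∃ u, 0 < μ u := by
    by_contra h
    push_neg at h
    have : ∑ u, μ u = 0 := Finset.sum_eq_zero fun u _ => le_antisymm (h u) (hμ0 u)
    simp [this] at hμ1
  refine Finset.sum_pos' (fun u _ => mul_nonneg (hμ0 u) (Real.exp_pos _).le) ?_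
  exact ⟨u, Finset.mem_univ u, mul_pos hu (Real.exp_pos _)⟩

lemma log_sum_exp_le {U : Type*} [Fintype U] (μ : U → ℝ) (hμ0 : ∀ u, 0 ≤ μ u)
    (hμ1 : ∑ u, μ u = 1) (ρ c : ℝ) (f g : U → ℝ) (hρ : 0 < ρ)
    (h : ∀ u, f u ≤ g u + c) :
    Real.log (∑ u, μ u * Real.exp (ρ * f u)) ≤
      Real.log (∑ u, μ u * Real.exp (ρ * g u)) + ρ * c := by
  have hposg := sum_exp_pos μ hμ0 hμ1 (fun u => ρ * g u)
  have hstep : (∑ u, μ u * Real.exp (ρ * f u)) ≤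
      (∑ u, μ u * Real.exp (ρ * g u)) * Real.exp (ρ * c) := by
    rw [Finset.sum_mul]
    refine Finset.sum_le_sum fun u _ => ?_
    rw [mul_assoc, ← Real.exp_add]
    refine mul_le_mul_of_nonneg_left (Real.exp_le_exp.2 ?_) (hμ0 u)
    nlinarith [h u]
  calc Real.log (∑ u, μ u * Real.exp (ρ * f u))
      ≤ Real.log ((∑ u, μ u * Real.exp (ρ * g u)) * Real.exp (ρ * c)) :=
        Real.log_le_log (sum_exp_pos μ hμ0 hμ1 (fun u => ρ * f u)) hstep
    _ = Real.log (∑ u, μ u * Real.exp (ρ * g u)) + ρ * c := by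
        rw [Real.log_mul (ne_of_gt hposg) (Real.exp_ne_zero _), Real.log_exp]

/-- γ-contraction property of the smoothing worst-case Bellman operator:
`‖T̃^π V − T̃^π W‖_∞ ≤ γ ‖V − W‖_∞`. -/
theorem smoothBellman_contraction {S A U : Type*}
    [Fintype S] [Fintype A] [Fintype U] [Nonempty S] [Nonempty A] [Nonempty U]
    (π : S → A → ℝ) (hπ0 : ∀ s a, 0 ≤ π s a) (hπ1 : ∀ s, ∑ a, π s a = 1)
    (μ : S → U → ℝ) (hμ0 : ∀ s u, 0 ≤ μ s u) (hμ1 : ∀ s, ∑ u, μ s u = 1)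
    (p : S → A → U → S → ℝ) (hp0 : ∀ s a u s', 0 ≤ p s a u s')
    (hp1 : ∀ s a u, ∑ s', p s a u s' = 1)
    (r : S → A → U → ℝ) (γ : ℝ) (hγ0 : 0 ≤ γ) (hγ1 : γ < 1)
    (ρ : ℝ) (hρ : 0 < ρ) (V W : S → ℝ) :
    normInf (fun s => smoothBellman ρ γ π μ p r V s - smoothBellman ρ γ π μ p r W s) ≤
      γ * normInf (fun s => V s - W s) := by
  set N := normInf (fun s => V s - W s) with hN
  have hVW : ∀ x : S, |V x - W x| ≤ N := fun x =>
    Finset.le_sup' (f := fun s => |V s - W s|) (Finset.mem_univ x)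
  have hN0 : 0 ≤ N := le_trans (abs_nonneg _) (hVW (Classical.arbitrary S))
  unfold normInf
  apply Finset.sup'_le
  intro s _
  -- the inner expectations
  set fV : U → ℝ := fun u => ∑ a, π s a * ∑ s', p s a u s' * (r s a u + γ * V s') with hfV
  set fW : U → ℝ := fun u => ∑ a, π s a * ∑ s', p s a u s' * (r s a u + γ * W s') with hfW
  have hdiff : ∀ u, fV u - fW u = ∑ a, π s a * ∑ s', p s a u s' * (γ * (V s' - W s')) := by
    intro u
    rw [hfV, hfW, ← Finset.sum_sub_distrib]
    refine Finset.sum_congr rfl fun a _ => ?_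
    rw [← mul_sub, ← Finset.sum_sub_distrib]
    congr 1
    refine Finset.sum_congr rfl fun s' _ => ?_
    ring
  have hkey : ∀ u, |fV u - fW u| ≤ γ * N := by
    intro u
    rw [hdiff u]
    calc |∑ a, π s a * ∑ s', p s a u s' * (γ * (V s' - W s'))|
        ≤ ∑ a, |π s a * ∑ s', p s a u s' * (γ * (V s' - W s'))| :=
          Finset.abs_sum_le_sum_abs _ _
      _ ≤ ∑ a, π s a * (γ * N) := by
          refine Finset.sum_le_sum fun a _ => ?_
          rw [abs_mul, abs_of_nonneg (hπ0 s a)]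
          refine mul_le_mul_of_nonneg_left ?_ (hπ0 s a)
          calc |∑ s', p s a u s' * (γ * (V s' - W s'))|
              ≤ ∑ s', |p s a u s' * (γ * (V s' - W s'))| := Finset.abs_sum_le_sum_abs _ _
            _ ≤ ∑ s', p s a u s' * (γ * N) := by
                refine Finset.sum_le_sum fun s' _ => ?_
                rw [abs_mul, abs_of_nonneg (hp0 s a u s')]
                refine mul_le_mul_of_nonneg_left ?_ (hp0 s a u s')
                rw [abs_mul, abs_of_nonneg hγ0]
                exact mul_le_mul_of_nonneg_left (hVW s') hγ0
            _ = γ * N := by rw [← Finset.sum_mul, hp1 s a u, one_mul]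
      _ = γ * N := by rw [← Finset.sum_mul, hπ1 s, one_mul]
  have h1 : Real.log (∑ u, μ s u * Real.exp (ρ * fV u)) ≤
      Real.log (∑ u, μ s u * Real.exp (ρ * fW u)) + ρ * (γ * N) :=
    log_sum_exp_le (μ s) (hμ0 s) (hμ1 s) ρ (γ * N) fV fW hρ
      (fun u => by have := abs_le.1 (hkey u); linarith [this.1, this.2])
  have h2 : Real.log (∑ u, μ s u * Real.exp (ρ * fW u)) ≤
      Real.log (∑ u, μ s u * Real.exp (ρ * fV u)) + ρ * (γ * N) :=
    log_sum_exp_le (μ s) (hμ0 s) (hμ1 s) ρ (γ * N) fW fV hρ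
      (fun u => by have := abs_le.1 (hkey u); linarith [this.1, this.2])
  show |smoothBellman ρ γ π μ p r V s - smoothBellman ρ γ π μ p r W s| ≤ γ * N
  unfold smoothBellman
  calc |(1/ρ) * Real.log (∑ u, μ s u * Real.exp (ρ * fV u)) -
        (1/ρ) * Real.log (∑ u, μ s u * Real.exp (ρ * fW u))|
      = (1/ρ) * |Real.log (∑ u, μ s u * Real.exp (ρ * fV u)) -
          Real.log (∑ u, μ s u * Real.exp (ρ * fW u))| := by
        rw [← mul_sub, abs_mul, abs_of_pos (by positivity)]
    _ ≤ (1/ρ) * (ρ * (γ * N)) := by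
        refine mul_le_mul_of_nonneg_left (abs_le.2 ⟨by linarith, by linarith⟩) (by positivity)
    _ = γ * N := by field_simp
end

section
/- Convergence of the smoothed policy-evaluation iteration: for any zero-sum Markov game with finite nonempty S, A, U, any protagonist policy π, adversarial policy μ, transition model p, reward r, discount γ ∈ [0,1), and any ρ > 0, if v_ρ^π is a fixed point of T̃^π and V_0 : S → ℝ is arbitrary, then the iterates V_{j+1} = T̃^π V_j satisfy ‖V_j − v_ρ^π‖_∞ → 0 as j → ∞; indeed ‖V_j − v_ρ^π‖_∞ ≤ γ^j · ‖V_0 − v_ρ^π‖_∞ for all j. -/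
open Finset

/-!
The operator `T̃^π` is a `γ`-contraction for the sup norm. The inner expectation
`V ↦ ∑_a π(a|s) ∑_{s'} p(s'|s,a,u) (r + γ V(s'))` is `γ`-Lipschitz because it averages `γ V`
against probability weights, and the outer smoothing `x ↦ (1/ρ) log ∑_u μ(u|s) exp (ρ x_u)` is
monotone and commutes with adding constants, hence `1`-Lipschitz. Iterating the contraction from
`V₀` and from the fixed point `v` gives `‖V_j − v‖_∞ ≤ γ^j ‖V₀ − v‖_∞`.
-/

section SmoothMax

open Real

variable {ι : Type*} [Fintype ι] {w : ι → ℝ}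

lemma abs_sum_mul_le_norm (hw0 : ∀ i, 0 ≤ w i) (hw1 : ∑ i, w i = 1) (x : ι → ℝ) :
    |∑ i, w i * x i| ≤ ‖x‖ :=
  calc |∑ i, w i * x i| ≤ ∑ i, |w i * x i| := abs_sum_le_sum_abs _ _
    _ = ∑ i, w i * ‖x i‖ := by simp only [abs_mul, abs_of_nonneg (hw0 _), Real.norm_eq_abs]
    _ ≤ ∑ i, w i * ‖x‖ := by gcongr with i; exacts [hw0 i, norm_le_pi_norm x i]
    _ = ‖x‖ := by rw [← sum_mul, hw1, one_mul]

noncomputable def smoothMax (ρ : ℝ) (w x : ι → ℝ) : ℝ :=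
  (1 / ρ) * log (∑ i, w i * exp (ρ * x i))

lemma smoothMax_le_add {ρ c : ℝ} {x y : ι → ℝ} (hw0 : ∀ i, 0 ≤ w i) (hw1 : ∑ i, w i = 1)
    (hρ : 0 < ρ) (h : ∀ i, x i ≤ y i + c) :
    smoothMax ρ w x ≤ smoothMax ρ w y + c := by
  obtain ⟨i₀, -, hi₀⟩ : ∃ i ∈ univ, (0 : ℝ) < w i :=
    exists_lt_of_sum_lt (by simp [hw1] : ∑ _i : ι, (0 : ℝ) < ∑ i, w i)
  have hpos (z : ι → ℝ) : 0 < ∑ i, w i * exp (ρ * z i) :=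
    sum_pos' (fun i _ => mul_nonneg (hw0 i) (exp_pos _).le)
      ⟨i₀, mem_univ _, mul_pos hi₀ (exp_pos _)⟩
  have hsum : ∑ i, w i * exp (ρ * x i) ≤ (∑ i, w i * exp (ρ * y i)) * exp (ρ * c) := by
    rw [sum_mul]
    refine sum_le_sum fun i _ => ?_
    rw [mul_assoc, ← exp_add, ← mul_add]
    exact mul_le_mul_of_nonneg_left (exp_le_exp.2 (mul_le_mul_of_nonneg_left (h i) hρ.le)) (hw0 i)
  have hlog := log_le_log (hpos x) hsum
  rw [log_mul (hpos y).ne' (exp_ne_zero _), log_exp] at hlog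
  unfold smoothMax
  calc 1 / ρ * log (∑ i, w i * exp (ρ * x i))
      ≤ 1 / ρ * (log (∑ i, w i * exp (ρ * y i)) + ρ * c) := by gcongr
    _ = 1 / ρ * log (∑ i, w i * exp (ρ * y i)) + c := by field_simp

lemma lipschitzWith_smoothMax {ρ : ℝ} (hw0 : ∀ i, 0 ≤ w i) (hw1 : ∑ i, w i = 1)
    (hρ : 0 < ρ) : LipschitzWith 1 (smoothMax ρ w) :=
  LipschitzWith.of_le_add fun x y => smoothMax_le_add hw0 hw1 hρ fun i => by
    have := dist_le_pi_dist x y i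
    rw [Real.dist_eq] at this
    linarith [le_abs_self (x i - y i)]

end SmoothMax

lemma normInf_eq_norm {S : Type*} [Fintype S] [Nonempty S] (V : S → ℝ) : normInf V = ‖V‖ := by
  have habs_le (s : S) : |V s| ≤ normInf V := le_sup' (fun t => |V t|) (mem_univ s)
  refine le_antisymm (sup'_le _ _ fun s _ => norm_le_pi_norm V s) ?_
  exact (pi_norm_le_iff_of_nonneg ((abs_nonneg _).trans (habs_le (Classical.arbitrary S)))).2
    habs_le

lemma normInf_sub_eq_dist {S : Type*} [Fintype S] [Nonempty S] (V W : S → ℝ) :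
    normInf (fun s => V s - W s) = dist V W := by
  rw [normInf_eq_norm, dist_eq_norm]
  rfl

lemma smoothBellman_apply {S A U : Type*} [Fintype S] [Fintype A] [Fintype U]
    (ρ γ : ℝ) (π : S → A → ℝ) (μ : S → U → ℝ) (p : S → A → U → S → ℝ)
    (r : S → A → U → ℝ) (V : S → ℝ) (s : S) :
    smoothBellman ρ γ π μ p r V s =
      smoothMax ρ (μ s) (fun u => ∑ a, π s a * ∑ s', p s a u s' * (r s a u + γ * V s')) :=
  rfl

lemma lipschitzWith_smoothBellman {S A U : Type*} [Fintype S] [Fintype A] [Fintype U]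
    {π : S → A → ℝ} (hπ0 : ∀ s a, 0 ≤ π s a) (hπ1 : ∀ s, ∑ a, π s a = 1)
    {μ : S → U → ℝ} (hμ0 : ∀ s u, 0 ≤ μ s u) (hμ1 : ∀ s, ∑ u, μ s u = 1)
    {p : S → A → U → S → ℝ} (hp0 : ∀ s a u s', 0 ≤ p s a u s')
    (hp1 : ∀ s a u, ∑ s', p s a u s' = 1)
    (r : S → A → U → ℝ) {γ : ℝ} (hγ0 : 0 ≤ γ) {ρ : ℝ} (hρ : 0 < ρ) :
    LipschitzWith γ.toNNReal (smoothBellman ρ γ π μ p r) := by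
  refine LipschitzWith.of_dist_le_mul fun V W => ?_
  rw [Real.coe_toNNReal γ hγ0]
  have hγd : 0 ≤ γ * dist V W := mul_nonneg hγ0 dist_nonneg
  have hexpect (s : S) (u : U) :
      |∑ a, π s a * ∑ s', p s a u s' * (r s a u + γ * V s') -
        ∑ a, π s a * ∑ s', p s a u s' * (r s a u + γ * W s')| ≤ γ * dist V W := by
    have hdiff : ∑ a, π s a * ∑ s', p s a u s' * (r s a u + γ * V s') -
        ∑ a, π s a * ∑ s', p s a u s' * (r s a u + γ * W s') =
        γ * ∑ a, π s a * ∑ s', p s a u s' * (V - W) s' := by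
      simp only [mul_sum, ← sum_sub_distrib, Pi.sub_apply]
      exact sum_congr rfl fun a _ => sum_congr rfl fun s' _ => by ring
    have hinner : ‖fun a => ∑ s', p s a u s' * (V - W) s'‖ ≤ ‖V - W‖ :=
      (pi_norm_le_iff_of_nonneg (norm_nonneg _)).2 fun a =>
        abs_sum_mul_le_norm (hp0 s a u) (hp1 s a u) (V - W)
    rw [hdiff, abs_mul, abs_of_nonneg hγ0, dist_eq_norm]
    exact mul_le_mul_of_nonneg_left
      ((abs_sum_mul_le_norm (hπ0 s) (hπ1 s) _).trans hinner) hγ0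
  refine (dist_pi_le_iff hγd).2 fun s => ?_
  rw [smoothBellman_apply, smoothBellman_apply]
  exact ((lipschitzWith_smoothMax (hμ0 s) (hμ1 s) hρ).dist_le_mul _ _).trans <| by
    rw [NNReal.coe_one, one_mul]
    exact (dist_pi_le_iff hγd).2 fun u => hexpect s u

theorem smoothBellman_iterates_converge_general {S A U : Type*}
    [Fintype S] [Fintype A] [Fintype U] [Nonempty S]
    (π : S → A → ℝ) (hπ0 : ∀ s a, 0 ≤ π s a) (hπ1 : ∀ s, ∑ a, π s a = 1)
    (μ : S → U → ℝ) (hμ0 : ∀ s u, 0 ≤ μ s u) (hμ1 : ∀ s, ∑ u, μ s u = 1)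
    (p : S → A → U → S → ℝ) (hp0 : ∀ s a u s', 0 ≤ p s a u s')
    (hp1 : ∀ s a u, ∑ s', p s a u s' = 1)
    (r : S → A → U → ℝ) (γ : ℝ) (hγ0 : 0 ≤ γ) (hγ1 : γ < 1)
    (ρ : ℝ) (hρ : 0 < ρ)
    (v : S → ℝ) (hv : smoothBellman ρ γ π μ p r v = v) (V₀ : S → ℝ) :
    (∀ j : ℕ,
      normInf (fun s => (smoothBellman ρ γ π μ p r)^[j] V₀ s - v s) ≤
        γ ^ j * normInf (fun s => V₀ s - v s)) ∧
    Filter.Tendsto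
      (fun j : ℕ => normInf (fun s => (smoothBellman ρ γ π μ p r)^[j] V₀ s - v s))
      Filter.atTop (nhds 0) := by
  have hT := lipschitzWith_smoothBellman hπ0 hπ1 hμ0 hμ1 hp0 hp1 r hγ0 hρ
  have hbound (j : ℕ) : normInf (fun s => (smoothBellman ρ γ π μ p r)^[j] V₀ s - v s) ≤
      γ ^ j * normInf (fun s => V₀ s - v s) := by
    have := (hT.iterate j).dist_le_mul V₀ v
    rw [Function.iterate_fixed hv, NNReal.coe_pow, Real.coe_toNNReal γ hγ0] at this
    simpa only [normInf_sub_eq_dist] using this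
  refine ⟨hbound, squeeze_zero (fun j => ?_) hbound ?_⟩
  · rw [normInf_sub_eq_dist]
    exact dist_nonneg
  · simpa using (tendsto_pow_atTop_nhds_zero_of_lt_one hγ0 hγ1).mul_const
      (normInf (fun s => V₀ s - v s))

/-- Convergence of the smoothed policy-evaluation iteration: if `v` is a fixed point of
`T̃^π` and `V_j = (T̃^π)^[j] V_0`, then `‖V_j − v‖_∞ ≤ γ^j ‖V_0 − v‖_∞` for all `j`,
and `‖V_j − v‖_∞ → 0` as `j → ∞`. -/
theorem smoothBellman_iterates_converge {S A U : Type*}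
    [Fintype S] [Fintype A] [Fintype U] [Nonempty S] [Nonempty A] [Nonempty U]
    (π : S → A → ℝ) (hπ0 : ∀ s a, 0 ≤ π s a) (hπ1 : ∀ s, ∑ a, π s a = 1)
    (μ : S → U → ℝ) (hμ0 : ∀ s u, 0 ≤ μ s u) (hμ1 : ∀ s, ∑ u, μ s u = 1)
    (p : S → A → U → S → ℝ) (hp0 : ∀ s a u s', 0 ≤ p s a u s')
    (hp1 : ∀ s a u, ∑ s', p s a u s' = 1)
    (r : S → A → U → ℝ) (γ : ℝ) (hγ0 : 0 ≤ γ) (hγ1 : γ < 1)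
    (ρ : ℝ) (hρ : 0 < ρ)
    (v : S → ℝ) (hv : smoothBellman ρ γ π μ p r v = v) (V₀ : S → ℝ) :
    (∀ j : ℕ,
      normInf (fun s => (smoothBellman ρ γ π μ p r)^[j] V₀ s - v s) ≤
        γ ^ j * normInf (fun s => V₀ s - v s)) ∧
    Filter.Tendsto
      (fun j : ℕ => normInf (fun s => (smoothBellman ρ γ π μ p r)^[j] V₀ s - v s))
      Filter.atTop (nhds 0) :=
  smoothBellman_iterates_converge_general π hπ0 hπ1 μ hμ0 hμ1 p hp0 hp1 r γ hγ0 hγ1 ρ hρ v hv V₀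
end
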